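/- For N ≥ 2, the function ρ_N attains a minimum on (0, +∞) at a unique point T > 0; moreover ρ_N(T) > 0, and ρ_N has no point of positive local maximum in (0, +∞). -/

import Mathlib

open MeasureTheory

/-- `ρ_N(r) = r^{1−N} e^{−r²/2} / ∫_r^{+∞} t^{1−N} e^{−t²/2} dt`. -/
noncomputable def rho (N : ℕ) (r : ℝ) : ℝ :=
  (r ^ (1 - (N : ℝ)) * Real.exp (-r ^ 2 / 2)) /
    ∫ t in Set.Ioi r, t ^ (1 - (N : ℝ)) * Real.exp (-t ^ 2 / 2)

/-!
Write `w(t) = t^{1-N} e^{-t²/2}`, `W(r) = ∫_r^∞ w` and `g(r) = r + (N-1)/r`. Then `w' = -g w` and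
`W' = -w`, so `ρ = w / W` solves the Riccati equation `ρ' = ρ (ρ - g)`, and `w(r) = ∫_r^∞ g w`.
Since `g` is increasing on `[√(N-1), ∞)`, the latter identity gives `ρ > g` there. Hence a critical
point `r` of `ρ` (where `ρ = g`) satisfies `r² < N-1`, so `ρ''(r) = -ρ(r) g'(r) > 0`: it is a local
minimum, and a local maximum there would make `ρ` locally constant. So `ρ` has no local maximum at
all, and two minimisers are impossible, as `ρ` would have a local maximum between them.
A minimiser exists because `ρ → ∞` at both ends: at `∞` since `ρ > g ≥ r`, at `0⁺` since `w` is
decreasing, so `W(r) / w(r) ≤ δ + W(δ) / w(r)` for `r ≤ δ`, while `w(r) → ∞` when `N ≥ 2`.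
-/

open Set Real Filter Topology

lemma setIntegral_Ioi_pos {f : ℝ → ℝ} {r : ℝ} (hf : IntegrableOn f (Ioi r))
    (hpos : ∀ t ∈ Ioi r, 0 < f t) : 0 < ∫ t in Ioi r, f t := by
  rw [setIntegral_pos_iff_support_of_nonneg_ae
    ((ae_restrict_iff' measurableSet_Ioi).2 (.of_forall fun t ht => (hpos t ht).le)) hf,
    inter_eq_right.2 fun t ht => Function.mem_support.2 (hpos t ht).ne', Real.volume_Ioi]
  exact ENNReal.zero_lt_top

theorem exists_isLocalMax_Ioo_of_forall_le {X Y : Type*} [ConditionallyCompleteLinearOrder X]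
    [DenselyOrdered X] [TopologicalSpace X] [OrderTopology X] [LinearOrder Y]
    [TopologicalSpace Y] [OrderTopology Y] {f : X → Y} {a b : X} (hab : a < b)
    (hf : ContinuousOn f (Icc a b)) (hfab : f a = f b) (hmin : ∀ x ∈ Icc a b, f a ≤ f x) :
    ∃ c ∈ Ioo a b, IsLocalMax f c := by
  obtain ⟨C, hC, hCmax⟩ := isCompact_Icc.exists_isMaxOn (nonempty_Icc.2 hab.le) hf
  by_cases hCa : f C = f a
  · obtain ⟨c, hc⟩ := nonempty_Ioo.2 hab
    refine ⟨c, hc, ?_⟩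
    filter_upwards [Icc_mem_nhds hc.1 hc.2] with x hx
    exact (hCmax hx).trans (hCa.trans_le (hmin c (Ioo_subset_Icc_self hc)))
  · have hCa' : a ≠ C := fun h => hCa (h ▸ rfl)
    have hCb : C ≠ b := fun h => hCa (h ▸ hfab.symm)
    exact ⟨C, ⟨hC.1.lt_of_ne hCa', hC.2.lt_of_ne hCb⟩,
      hCmax.isLocalMax (Icc_mem_nhds (hC.1.lt_of_ne hCa') (hC.2.lt_of_ne hCb))⟩

noncomputable def weight (N : ℕ) (t : ℝ) : ℝ := t ^ (1 - (N : ℝ)) * exp (-t ^ 2 / 2)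

noncomputable def weightTail (N : ℕ) (r : ℝ) : ℝ := ∫ t in Ioi r, weight N t

noncomputable def decayRate (N : ℕ) (r : ℝ) : ℝ := r + ((N : ℝ) - 1) / r

lemma rho_eq_weight_div_weightTail (N : ℕ) (r : ℝ) : rho N r = weight N r / weightTail N r :=
  rfl

section

variable {N : ℕ} {r s : ℝ}

lemma weight_pos (hr : 0 < r) : 0 < weight N r :=
  mul_pos (rpow_pos_of_pos hr _) (exp_pos _)

lemma continuousAt_weight (hr : 0 < r) : ContinuousAt (weight N) r :=
  (continuousAt_rpow_const _ _ (Or.inl hr.ne')).mul (by fun_prop)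

lemma continuousOn_weight : ContinuousOn (weight N) (Ioi 0) :=
  fun _ hr => (continuousAt_weight hr).continuousWithinAt

lemma hasDerivAt_weight (hr : 0 < r) :
    HasDerivAt (weight N) (-(decayRate N r * weight N r)) r := by
  have hsq : HasDerivAt (fun x : ℝ => -x ^ 2 / 2) (-r) r :=
    ((hasDerivAt_pow 2 r).neg.div_const 2).congr_deriv (by norm_num; ring)
  have h := (hasDerivAt_rpow_const (p := 1 - (N : ℝ)) (Or.inl hr.ne')).mul hsq.exp
  refine h.congr_deriv ?_
  simp only [weight, decayRate, rpow_sub hr, rpow_one]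
  field_simp
  ring

lemma le_decayRate (hN : 1 ≤ N) (hr : 0 < r) : r ≤ decayRate N r := by
  have hN' : (1 : ℝ) ≤ N := by exact_mod_cast hN
  exact le_add_of_nonneg_right (div_nonneg (by linarith) hr.le)

lemma weight_antitoneOn (hN : 1 ≤ N) : AntitoneOn (weight N) (Ioi 0) := by
  intro r hr t _ hrt
  have : (1 : ℝ) ≤ N := by exact_mod_cast hN
  exact mul_le_mul (rpow_le_rpow_of_nonpos hr hrt (by linarith))
    (exp_le_exp.2 (by nlinarith [mem_Ioi.1 hr])) (exp_pos _).le (rpow_pos_of_pos hr _).le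

lemma tendsto_weight_atTop (hN : 1 ≤ N) : Tendsto (weight N) atTop (𝓝 0) := by
  have hN' : (1 : ℝ) ≤ N := by exact_mod_cast hN
  refine squeeze_zero' (g := fun t => exp (-t ^ 2 / 2)) ?_ ?_ ?_
  · filter_upwards [eventually_gt_atTop 0] with t ht using (weight_pos ht).le
  · filter_upwards [eventually_ge_atTop 1] with t ht
    exact mul_le_of_le_one_left (exp_pos _).le (rpow_le_one_of_one_le_of_nonpos ht (by linarith))
  · exact tendsto_exp_atBot.comp
      ((tendsto_neg_atTop_atBot.comp (tendsto_pow_atTop two_ne_zero)).atBot_div_const two_pos)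

lemma integral_decayRate_mul_weight (hN : 1 ≤ N) (hr : 0 < r) :
    ∫ t in Ioi r, decayRate N t * weight N t = weight N r := by
  have hpos : ∀ t ∈ Ioi r, 0 < t := fun t ht => hr.trans ht
  rw [integral_Ioi_of_hasDerivAt_of_nonneg (g := -weight N) (l := 0)
    (continuousAt_weight hr).neg.continuousWithinAt
    (fun t ht => (hasDerivAt_weight (hpos t ht)).neg.congr_deriv (neg_neg _))
    (fun t ht => (mul_pos ((hpos t ht).trans_le (le_decayRate hN (hpos t ht)))
      (weight_pos (hpos t ht))).le)
    (by rw [← neg_zero]; exact (tendsto_weight_atTop hN).neg)]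
  simp

lemma integrableOn_decayRate_mul_weight (hN : 1 ≤ N) (hr : 0 < r) :
    IntegrableOn (fun t => decayRate N t * weight N t) (Ioi r) :=
  Integrable.of_integral_ne_zero <| by
    rw [integral_decayRate_mul_weight hN hr]
    exact (weight_pos hr).ne'

lemma integrableOn_weight (hN : 1 ≤ N) (hr : 0 < r) : IntegrableOn (weight N) (Ioi r) := by
  refine ((integrableOn_decayRate_mul_weight hN hr).const_mul r⁻¹).mono'
    ((continuousOn_weight.mono (Ioi_subset_Ioi hr.le)).aestronglyMeasurable measurableSet_Ioi) ?_
  filter_upwards [ae_restrict_mem measurableSet_Ioi] with t ht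
  have ht0 : 0 < t := hr.trans ht
  rw [norm_of_nonneg (weight_pos ht0).le, ← mul_assoc]
  exact le_mul_of_one_le_left (weight_pos ht0).le
    ((one_le_inv_mul₀ hr).2 (ht.le.trans (le_decayRate hN ht0)))

lemma weightTail_pos (hN : 1 ≤ N) (hr : 0 < r) : 0 < weightTail N r :=
  setIntegral_Ioi_pos (integrableOn_weight hN hr) fun _ ht => weight_pos (hr.trans ht)

lemma rho_pos (hN : 1 ≤ N) (hr : 0 < r) : 0 < rho N r :=
  div_pos (weight_pos hr) (weightTail_pos hN hr)

lemma hasDerivAt_weightTail (hN : 1 ≤ N) (hr : 0 < r) :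
    HasDerivAt (weightTail N) (-weight N r) r := by
  have hint : HasDerivAt (fun x => ∫ t in r..x, weight N t) (weight N r) r :=
    intervalIntegral.integral_hasDerivAt_right IntervalIntegrable.refl
      (continuousOn_weight.stronglyMeasurableAtFilter isOpen_Ioi r hr) (continuousAt_weight hr)
  refine (hint.const_sub (weightTail N r)).congr_of_eventuallyEq ?_
  filter_upwards [Ioi_mem_nhds hr] with x hx
  rw [← intervalIntegral.integral_Ioi_sub_Ioi' (integrableOn_weight hN hr)
    (integrableOn_weight hN hx)]
  unfold weightTail
  ring

lemma hasDerivAt_rho (hN : 1 ≤ N) (hr : 0 < r) :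
    HasDerivAt (rho N) (rho N r * (rho N r - decayRate N r)) r := by
  refine ((hasDerivAt_weight hr).div (hasDerivAt_weightTail hN hr)
    (weightTail_pos hN hr).ne').congr_deriv ?_
  have hW := (weightTail_pos hN hr).ne'
  rw [rho_eq_weight_div_weightTail]
  field_simp
  ring

lemma continuousAt_rho (hN : 1 ≤ N) (hr : 0 < r) : ContinuousAt (rho N) r :=
  (hasDerivAt_rho hN hr).continuousAt

lemma decayRate_lt_decayRate (hr : 0 < r) (hrs : r < s) (h : (N : ℝ) - 1 ≤ r ^ 2) :
    decayRate N r < decayRate N s := by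
  have hs : 0 < s := hr.trans hrs
  have hdiff : decayRate N s - decayRate N r = (s - r) * (r * s - ((N : ℝ) - 1)) / (r * s) := by
    unfold decayRate
    field_simp
    ring
  rw [← sub_pos, hdiff]
  exact div_pos (mul_pos (sub_pos.2 hrs) (by nlinarith)) (mul_pos hr hs)

lemma decayRate_lt_rho (hN : 1 ≤ N) (hr : 0 < r) (h : (N : ℝ) - 1 ≤ r ^ 2) :
    decayRate N r < rho N r := by
  have hint := integrableOn_decayRate_mul_weight hN hr
  have hint' := (integrableOn_weight hN hr).const_mul (decayRate N r)
  rw [rho_eq_weight_div_weightTail, lt_div_iff₀ (weightTail_pos hN hr), ← sub_pos,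
    ← integral_decayRate_mul_weight hN hr, weightTail, ← integral_const_mul,
    ← integral_sub hint hint']
  refine setIntegral_Ioi_pos (hint.sub hint') fun t ht => ?_
  rw [← sub_mul]
  exact mul_pos (sub_pos.2 (decayRate_lt_decayRate hr ht h)) (weight_pos (hr.trans ht))

lemma hasDerivAt_decayRate (hr : 0 < r) :
    HasDerivAt (decayRate N) (1 - ((N : ℝ) - 1) / r ^ 2) r := by
  refine ((hasDerivAt_id r).add ((hasDerivAt_const r ((N : ℝ) - 1)).div (hasDerivAt_id r)
    hr.ne')).congr_deriv ?_
  simp only [id]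
  ring

lemma deriv_deriv_rho_pos (hN : 1 ≤ N) (hr : 0 < r) (hcrit : deriv (rho N) r = 0) :
    0 < deriv (deriv (rho N)) r := by
  have hρ := hasDerivAt_rho hN hr
  have hρg : rho N r = decayRate N r := by
    rw [hρ.deriv] at hcrit
    exact sub_eq_zero.1 ((mul_eq_zero.1 hcrit).resolve_left (rho_pos hN hr).ne')
  have hsq : r ^ 2 < (N : ℝ) - 1 := lt_of_not_ge fun h => (decayRate_lt_rho hN hr h).ne' hρg
  have hderiv : deriv (rho N) =ᶠ[𝓝 r] fun x => rho N x * (rho N x - decayRate N x) := by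
    filter_upwards [Ioi_mem_nhds hr] with x hx using (hasDerivAt_rho hN hx).deriv
  have hD : HasDerivAt (fun x => rho N x * (rho N x - decayRate N x)) _ r :=
    hρ.mul (hρ.sub (hasDerivAt_decayRate hr))
  rw [hderiv.deriv_eq, hD.deriv]
  simp only [hρg, sub_self, mul_zero, zero_add, zero_sub]
  exact mul_pos (hρg ▸ rho_pos hN hr)
    (neg_pos.2 (sub_neg.2 ((one_lt_div (by positivity)).2 hsq)))

lemma not_isLocalMax_rho (hN : 1 ≤ N) (hr : 0 < r) : ¬IsLocalMax (rho N) r := by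
  intro hmax
  have hcrit := hmax.deriv_eq_zero
  have hpos := deriv_deriv_rho_pos hN hr hcrit
  have hmin : IsLocalMin (rho N) r :=
    isLocalMin_of_deriv_deriv_pos hpos hcrit (continuousAt_rho hN hr)
  have hconst : rho N =ᶠ[𝓝 r] fun _ => rho N r := by
    filter_upwards [hmin, hmax] with x hx₁ hx₂ using le_antisymm hx₂ hx₁
  rw [hconst.deriv.deriv_eq] at hpos
  simp at hpos

lemma eq_of_forall_rho_le (hN : 1 ≤ N) (hr : 0 < r) (hs : 0 < s)
    (hrmin : ∀ x, 0 < x → rho N r ≤ rho N x) (hsmin : ∀ x, 0 < x → rho N s ≤ rho N x) :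
    r = s := by
  wlog hrs : r < s generalizing r s
  · rcases (not_lt.1 hrs).eq_or_lt with h | h
    exacts [h.symm, (this hs hr hsmin hrmin h).symm]
  obtain ⟨c, hc, hmax⟩ := exists_isLocalMax_Ioo_of_forall_le hrs
    (fun x hx => (continuousAt_rho hN (hr.trans_le hx.1)).continuousWithinAt)
    (le_antisymm (hrmin s hs) (hsmin r hr)) (fun x hx => hrmin x (hr.trans_le hx.1))
  exact (not_isLocalMax_rho hN (hr.trans hc.1) hmax).elim

lemma tendsto_weight_nhdsGT_zero (hN : 2 ≤ N) : Tendsto (weight N) (𝓝[>] 0) atTop := by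
  have hN' : (2 : ℝ) ≤ N := by exact_mod_cast hN
  have hexp : Tendsto (fun t : ℝ => exp (-t ^ 2 / 2)) (𝓝[>] 0) (𝓝 1) :=
    ((by fun_prop : Continuous fun t : ℝ => exp (-t ^ 2 / 2)).tendsto' 0 1 (by simp)).mono_left
      nhdsWithin_le_nhds
  exact (tendsto_rpow_neg_nhdsGT_zero (by linarith)).atTop_mul_pos one_pos hexp

lemma weightTail_le (hN : 1 ≤ N) (hr : 0 < r) (hrs : r ≤ s) :
    weightTail N r ≤ (s - r) * weight N r + weightTail N s := by
  have hsplit := intervalIntegral.integral_Ioi_sub_Ioi (integrableOn_weight hN hr) hrs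
  have hbound : ∫ t in r..s, weight N t ≤ (s - r) * weight N r := by
    have hmono := intervalIntegral.integral_mono_on (μ := volume) (g := fun _ => weight N r) hrs
      ((continuousOn_weight.mono fun t ht => hr.trans_le ht.1).intervalIntegrable_of_Icc hrs)
      intervalIntegrable_const fun t ht => weight_antitoneOn hN hr (hr.trans_le ht.1) ht.1
    simpa using hmono
  unfold weightTail at *
  linarith

lemma tendsto_rho_nhdsGT_zero (hN : 2 ≤ N) : Tendsto (rho N) (𝓝[>] 0) atTop := by
  have hN1 : 1 ≤ N := by omega
  have hpos : ∀ᶠ r in 𝓝[>] 0, 0 < weightTail N r / weight N r := by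
    filter_upwards [self_mem_nhdsWithin] with r hr
    exact div_pos (weightTail_pos hN1 hr) (weight_pos hr)
  suffices h : Tendsto (fun r => weightTail N r / weight N r) (𝓝[>] 0) (𝓝[>] 0) by
    exact h.inv_tendsto_nhdsGT_zero.congr fun r => inv_div _ _
  refine tendsto_nhdsWithin_iff.2 ⟨tendsto_order.2 ⟨fun a ha => ?_, fun ε hε => ?_⟩, hpos⟩
  · exact hpos.mono fun r hr => ha.trans hr
  · have hsmall : ∀ᶠ r in 𝓝[>] 0, weightTail N (ε / 2) / weight N r < ε / 2 :=
      (tendsto_const_nhds.div_atTop (tendsto_weight_nhdsGT_zero hN)).eventually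
        (gt_mem_nhds (half_pos hε))
    filter_upwards [hsmall, Ioo_mem_nhdsGT (half_pos hε)] with r hsmall hr
    have hw := weight_pos (N := N) hr.1
    calc weightTail N r / weight N r
        ≤ ((ε / 2 - r) * weight N r + weightTail N (ε / 2)) / weight N r :=
          div_le_div_of_nonneg_right (weightTail_le hN1 hr.1 hr.2.le) hw.le
      _ = ε / 2 - r + weightTail N (ε / 2) / weight N r := by field_simp
      _ < ε := by linarith [hr.1]

lemma tendsto_rho_atTop (hN : 1 ≤ N) : Tendsto (rho N) atTop atTop := by
  have hN' : (1 : ℝ) ≤ N := by exact_mod_cast hN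
  refine tendsto_atTop_mono' atTop ?_ tendsto_id
  filter_upwards [eventually_ge_atTop (N : ℝ)] with r hr
  have hr0 : 0 < r := by linarith
  exact (le_decayRate hN hr0).trans (decayRate_lt_rho hN hr0 (by nlinarith)).le

lemma exists_forall_rho_le (hN : 2 ≤ N) : ∃ T, 0 < T ∧ ∀ r, 0 < r → rho N T ≤ rho N r := by
  have hN1 : 1 ≤ N := by omega
  have hcont : Continuous (rho N ∘ exp) := continuous_iff_continuousAt.2 fun s =>
    (continuousAt_rho hN1 (exp_pos s)).comp continuous_exp.continuousAt
  have hlim : Tendsto (rho N ∘ exp) (cocompact ℝ) atTop := by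
    rw [cocompact_eq_atBot_atTop, tendsto_sup]
    exact ⟨(tendsto_rho_nhdsGT_zero hN).comp tendsto_exp_atBot_nhdsGT,
      (tendsto_rho_atTop hN1).comp tendsto_exp_atTop⟩
  obtain ⟨s, hs⟩ := hcont.exists_forall_le hlim
  exact ⟨exp s, exp_pos s, fun r hr => by simpa [exp_log hr] using hs (log r)⟩

end

/-- `ρ_N` attains its minimum on `(0, +∞)` at a unique point `T > 0`, where it is
positive; moreover `ρ_N` has no point of positive local maximum in `(0, +∞)`. -/
theorem rho_min (N : ℕ) (hN : 2 ≤ N) :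
    (∃! T : ℝ, 0 < T ∧ ∀ r : ℝ, 0 < r → rho N T ≤ rho N r) ∧
    (∀ T : ℝ, 0 < T → (∀ r : ℝ, 0 < r → rho N T ≤ rho N r) → 0 < rho N T) ∧
    (∀ r : ℝ, 0 < r → 0 < rho N r → ¬ IsLocalMaxOn (rho N) (Set.Ioi 0) r) := by
  have hN1 : 1 ≤ N := by omega
  obtain ⟨T, hT, hTmin⟩ := exists_forall_rho_le hN
  refine ⟨⟨T, ⟨hT, hTmin⟩, fun S ⟨hS, hSmin⟩ => eq_of_forall_rho_le hN1 hS hT hSmin hTmin⟩,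
    fun T' hT' _ => rho_pos hN1 hT', fun r hr _ hmax => ?_⟩
  exact not_isLocalMax_rho hN1 hr (hmax.isLocalMax (Ioi_mem_nhds hr))
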